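/- arXiv:1909.08238 — 6 statements merged into one kernel-verified Lean document; each statement's English description precedes it below -/
import Mathlib

section
/- For any LPMLN program M and any consistent set X of literals such that (X, X) is an SE-model of M, the set X is a stable model of the LPMLN program M ∪ N, where N = {w : a. | a ∈ X} consists of one weighted fact for each literal of X. -/
attribute [local instance] Classical.propDecidable

/-- A literal is a signed atom. -/
abbrev Lit (A : Type) := Bool × A

/-- A set of literals is consistent if it contains no complementary pair. -/
def Consistent {A : Type} (X : Set (Lit A)) : Prop :=
  ∀ a : A, ¬((true, a) ∈ X ∧ (false, a) ∈ X)

/-- An ASP rule: head ← pos, not neg. -/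
structure Rule (A : Type) where
  head : Set (Lit A)
  pos : Set (Lit A)
  neg : Set (Lit A)

/-- Satisfaction of a rule by a set of literals. -/
def satRule {A : Type} (Y : Set (Lit A)) (r : Rule A) : Prop :=
  (r.pos ⊆ Y ∧ r.neg ∩ Y = ∅) → (r.head ∩ Y).Nonempty

/-- An LPMLN program: a finite set of real-weighted rules. -/
abbrev Program (A : Type) := Finset (ℝ × Rule A)

/-- Satisfaction of an unweighted program. -/
def satProg {A : Type} (Y : Set (Lit A)) (P : Set (Rule A)) : Prop :=
  ∀ r ∈ P, satRule Y r

/-- The LPMLN reduct M_Y : rules of M satisfied by Y. -/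
noncomputable def reduct {A : Type} (M : Program A) (Y : Set (Lit A)) : Program A :=
  M.filter (fun wr => satRule Y wr.2)

/-- Drop weights. -/
def unweight {A : Type} (M : Program A) : Set (Rule A) :=
  {r | ∃ w, (w, r) ∈ M}

/-- The GL-reduct of an unweighted program w.r.t. Y. -/
def glReduct {A : Type} (P : Set (Rule A)) (Y : Set (Lit A)) : Set (Rule A) :=
  {r' | ∃ r ∈ P, r.neg ∩ Y = ∅ ∧ r' = ⟨r.head, r.pos, ∅⟩}

/-- (X,Y) is an SE-model of the LPMLN program M. -/
def SEModel {A : Type} (M : Program A) (X Y : Set (Lit A)) : Prop :=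
  X ⊆ Y ∧ Consistent X ∧ Consistent Y ∧
  satProg X (glReduct (unweight (reduct M Y)) Y) ∧
  satProg Y (glReduct (unweight (reduct M Y)) Y)

/-- X is a stable model of the LPMLN program M. -/
def StableModel {A : Type} (M : Program A) (X : Set (Lit A)) : Prop :=
  Consistent X ∧ satProg X (glReduct (unweight (reduct M X)) X) ∧
  ∀ Z, Z ⊂ X → ¬ satProg Z (glReduct (unweight (reduct M X)) X)

/-- Weight degree W(M,Y) = W(M_Y) = exp(sum of weights of rules satisfied by Y). -/
noncomputable def WDeg {A : Type} (M : Program A) (Y : Set (Lit A)) : ℝ :=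
  Real.exp (∑ wr ∈ reduct M Y, wr.1)

/-- Probability degree of X w.r.t. M (soft programs over a finite vocabulary). -/
noncomputable def PDeg {A : Type} [Fintype A] (M : Program A) (X : Set (Lit A)) : ℝ :=
  WDeg M X /
    ∑ Y ∈ Finset.univ.filter (fun Y : Set (Lit A) => StableModel M Y), WDeg M Y


theorem stmt2 {A : Type} [Fintype A] (M : Program A) (X : Set (Lit A)) (w : ℝ)
    (h : SEModel M X X) :
    StableModel (M ∪ X.toFinset.image (fun l => (w, (⟨{l}, ∅, ∅⟩ : Rule A)))) X := by
  obtain ⟨-, hcons, -, hsatX, -⟩ := h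
  set N : Program A := X.toFinset.image (fun l => (w, (⟨{l}, ∅, ∅⟩ : Rule A))) with hN
  refine ⟨hcons, ?_, ?_⟩
  · intro r' hr'
    obtain ⟨r, ⟨w', hw'⟩, hneg, rfl⟩ := hr'
    rw [reduct, Finset.mem_filter, Finset.mem_union] at hw'
    obtain ⟨hmem | hmem, hsat⟩ := hw'
    · exact hsatX _ ⟨r, ⟨w', by rw [reduct, Finset.mem_filter]; exact ⟨hmem, hsat⟩⟩, hneg, rfl⟩
    · simp only [hN, Finset.mem_image, Set.mem_toFinset] at hmem
      obtain ⟨l, hl, heq⟩ := hmem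
      have hr : r = ⟨{l}, ∅, ∅⟩ := (Prod.mk.injEq _ _ _ _).mp heq |>.2.symm ▸ rfl
      subst hr
      intro _
      exact ⟨l, by simp [hl]⟩
  · intro Z hZ hsatZ
    obtain ⟨l, hlX, hlZ⟩ := Set.exists_of_ssubset hZ
    have hrule : (⟨{l}, ∅, ∅⟩ : Rule A) ∈ glReduct (unweight (reduct (M ∪ N) X)) X := by
      refine ⟨⟨{l}, ∅, ∅⟩, ⟨w, ?_⟩, by simp, rfl⟩
      rw [reduct, Finset.mem_filter, Finset.mem_union]
      constructor
      · right; simp only [hN, Finset.mem_image, Set.mem_toFinset]; exact ⟨l, hlX, rfl⟩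
      · intro _; exact ⟨l, by simp [hlX]⟩
    have := hsatZ _ hrule ⟨by simp, by simp⟩
    obtain ⟨x, hx1, hx2⟩ := this
    simp only [Set.mem_singleton_iff] at hx1
    exact hlZ (hx1 ▸ hx2)
end

section
/- A consistent set X of literals is a stable model of an LPMLN program M if and only if (X, X) is an SE-model of M and for every proper subset X' of X, the pair (X', X) is not an SE-model of M. -/
attribute [local instance] Classical.propDecidable

theorem stmt3 {A : Type} (M : Program A) (X : Set (Lit A)) (hX : Consistent X) :
    StableModel M X ↔ (SEModel M X X ∧ ∀ X', X' ⊂ X → ¬ SEModel M X' X) := by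
  constructor
  · rintro ⟨hc, hsat, hmin⟩
    refine ⟨⟨subset_rfl, hX, hX, hsat, hsat⟩, ?_⟩
    intro X' hss hse
    exact hmin X' hss hse.2.2.2.1
  · rintro ⟨⟨_, _, _, hsat, _⟩, hmin⟩
    refine ⟨hX, hsat, ?_⟩
    intro Z hss hZsat
    have hZcons : Consistent Z := fun a ⟨h1, h2⟩ =>
      hX a ⟨hss.1 h1, hss.1 h2⟩
    exact hmin Z hss ⟨hss.1, hZcons, hX, hZsat, hsat⟩
end

section
/- If an ASP rule r satisfies h(r) ∩ b+(r) ≠ ∅ (TAUT), then for every consistent set Y of literals and every subset X ⊆ Y, the SE-interpretation (X,Y) is an SE-model of the single-rule LPMLN program {w : r}; hence {w : r} has the same SE-models as the empty program. -/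
attribute [local instance] Classical.propDecidable

theorem stmt7 {A : Type} (r : Rule A) (hTAUT : (r.head ∩ r.pos).Nonempty) (w : ℝ) :
    (∀ X Y : Set (Lit A), X ⊆ Y → Consistent X → Consistent Y →
        SEModel ({(w, r)} : Program A) X Y) ∧
    (∀ X Y : Set (Lit A),
        SEModel ({(w, r)} : Program A) X Y ↔ SEModel (∅ : Program A) X Y) := by
  obtain ⟨a, ha, hp⟩ := hTAUT
  have hsat : ∀ Z Y' : Set (Lit A), satProg Z (glReduct (unweight (reduct ({(w, r)} : Program A) Y')) Y') := by
    intro Z Y' r' hr'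
    obtain ⟨r0, hr0, hneg, rfl⟩ := hr'
    obtain ⟨w0, hw0⟩ := hr0
    simp only [reduct, Finset.mem_filter, Finset.mem_singleton, Prod.mk.injEq] at hw0
    obtain ⟨⟨_, rfl⟩, _⟩ := hw0
    intro ⟨hpos, _⟩
    exact ⟨a, ha, hpos hp⟩
  have hempty : ∀ Z Y' : Set (Lit A), satProg Z (glReduct (unweight (reduct (∅ : Program A) Y')) Y') := by
    intro Z Y' r' hr'
    obtain ⟨r0, ⟨w0, hw0⟩, _⟩ := hr'
    simp [reduct] at hw0
  constructor
  · intro X Y hXY hcX hcY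
    exact ⟨hXY, hcX, hcY, hsat X Y, hsat Y Y⟩
  · intro X Y
    constructor
    · rintro ⟨h1, h2, h3, _, _⟩
      exact ⟨h1, h2, h3, hempty X Y, hempty Y Y⟩
    · rintro ⟨h1, h2, h3, _, _⟩
      exact ⟨h1, h2, h3, hsat X Y, hsat Y Y⟩
end

section
/- If an ASP rule r is a constraint, i.e., h(r) = ∅, then the single-rule LPMLN program {w : r} has the same SE-models as the empty program. -/
attribute [local instance] Classical.propDecidable

theorem stmt9 {A : Type} (r : Rule A) (hCONSTR : r.head = ∅) (w : ℝ) :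
    ∀ X Y : Set (Lit A),
      SEModel ({(w, r)} : Program A) X Y ↔ SEModel (∅ : Program A) X Y := by
  intro X Y
  have hempty : glReduct (unweight (reduct (∅ : Program A) Y)) Y = ∅ := by
    ext r'
    simp [glReduct, unweight, reduct]
  constructor
  · rintro ⟨hXY, hCX, hCY, -, -⟩
    refine ⟨hXY, hCX, hCY, ?_, ?_⟩ <;> rw [hempty] <;> intro r hr <;> exact absurd hr (by simp)
  · rintro ⟨hXY, hCX, hCY, -, -⟩
    have key : ∀ r' ∈ glReduct (unweight (reduct ({(w, r)} : Program A) Y)) Y,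
        satRule X r' ∧ satRule Y r' := by
      rintro r' ⟨s, hs, hneg, hr'⟩
      obtain ⟨w', hw'⟩ := hs
      simp only [reduct, Finset.mem_filter, Finset.mem_singleton, Prod.mk.injEq] at hw'
      obtain ⟨⟨hw, hsr⟩, hsat⟩ := hw'
      subst hsr
      have hnpos : ¬ s.pos ⊆ Y := by
        intro hpos
        have := hsat ⟨hpos, hneg⟩
        rw [hCONSTR] at this
        simp at this
      subst hr'
      constructor <;> rintro ⟨hpos, -⟩
      · exact absurd (hpos.trans hXY) hnpos
      · exact absurd hpos hnpos
    exact ⟨hXY, hCX, hCY, fun r' hr' => (key r' hr').1, fun r' hr' => (key r' hr').2⟩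
end

section
/- If an ASP rule r satisfies h(r) ⊆ b-(r) (CONSTR2), then the single-rule LPMLN program {w : r} has the same SE-models as the empty program. -/
attribute [local instance] Classical.propDecidable

theorem stmt10 {A : Type} (r : Rule A) (hCONSTR2 : r.head ⊆ r.neg) (w : ℝ) :
    ∀ X Y : Set (Lit A),
      SEModel ({(w, r)} : Program A) X Y ↔ SEModel (∅ : Program A) X Y := by
  intro X Y
  have hempty : ∀ Z : Set (Lit A),
      satProg Z (glReduct (unweight (reduct (∅ : Program A) Y)) Y) := by
    intro Z r' hr'
    rcases hr' with ⟨s, hs, _⟩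
    rcases hs with ⟨v, hv⟩
    simp [reduct] at hv
  constructor
  · rintro ⟨hXY, hCX, hCY, _, _⟩
    exact ⟨hXY, hCX, hCY, hempty X, hempty Y⟩
  · rintro ⟨hXY, hCX, hCY, _, _⟩
    refine ⟨hXY, hCX, hCY, ?_, ?_⟩ <;>
    · intro r' hr'
      rcases hr' with ⟨s, hs, hneg, heq⟩
      rcases hs with ⟨v, hv⟩
      simp [reduct, Finset.mem_filter] at hv
      obtain ⟨⟨hv1, hv2⟩, hsat⟩ := hv
      subst hv2
      have hhead : s.head ∩ Y = ∅ := by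
        apply Set.eq_empty_of_subset_empty
        rw [← hneg]
        exact Set.inter_subset_inter_left Y hCONSTR2
      have hnpos : ¬ s.pos ⊆ Y := by
        intro hpos
        have := hsat ⟨hpos, hneg⟩
        rw [hhead] at this
        exact Set.not_nonempty_empty this
      subst heq
      intro ⟨hp, _⟩
      exact (hnpos (show s.pos ⊆ Y from fun x hx => by
        first
        | exact hXY (hp hx)
        | exact hp hx)).elim
end

section
/- A single-rule LPMLN program {w : r} where r is a nonempty-bodied constraint (h(r) = ∅ and b+(r) ∪ b-(r) ≠ ∅) and w ≠ 0 is semi-strongly equivalent to the empty program but not w-strongly equivalent to it: there exists an LPMLN program N and a stable model X of {w:r} ∪ N with W({w:r} ∪ N, X) ≠ W(N, X). -/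
attribute [local instance] Classical.propDecidable

lemma mem_unweight_reduct {A : Type} {M : Program A} {X : Set (Lit A)} {s : Rule A} :
    s ∈ unweight (reduct M X) ↔ (∃ v, (v, s) ∈ M) ∧ satRule X s := by
  simp only [unweight, reduct, Finset.mem_filter, Set.mem_setOf_eq]
  constructor
  · rintro ⟨v, hv, hs⟩; exact ⟨⟨v, hv⟩, hs⟩
  · rintro ⟨⟨v, hv⟩, hs⟩; exact ⟨v, hv, hs⟩

lemma key_equiv {A : Type} (r : Rule A) (hHead : r.head = ∅) (w : ℝ)
    (N : Program A) (X Y : Set (Lit A)) (hYX : Y ⊆ X) :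
    satProg Y (glReduct (unweight (reduct (({(w, r)} : Program A) ∪ N) X)) X) ↔
    satProg Y (glReduct (unweight (reduct N X)) X) := by
  constructor
  · intro h r'' hr''
    obtain ⟨s, hs, hneg, heq⟩ := hr''
    rw [mem_unweight_reduct] at hs
    obtain ⟨⟨v, hv⟩, hsat⟩ := hs
    refine h r'' ⟨s, ?_, hneg, heq⟩
    rw [mem_unweight_reduct]
    exact ⟨⟨v, Finset.mem_union_right _ hv⟩, hsat⟩
  · intro h r'' hr''
    obtain ⟨s, hs, hneg, heq⟩ := hr''
    rw [mem_unweight_reduct] at hs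
    obtain ⟨⟨v, hv⟩, hsat⟩ := hs
    rcases Finset.mem_union.mp hv with hv | hv
    · -- s = r
      have hsr : s = r := (Prod.mk.injEq _ _ _ _ ▸ (Finset.mem_singleton.mp hv)).2
      subst hsr
      intro ⟨hpos, _⟩
      rw [heq] at hpos
      have := hsat ⟨fun x hx => hYX (hpos hx), hneg⟩
      rw [hHead] at this
      simp at this
    · exact h r'' ⟨s, mem_unweight_reduct.mpr ⟨⟨v, hv⟩, hsat⟩, hneg, heq⟩

theorem stmt11 {A : Type} (r : Rule A)
    (hHead : r.head = ∅) (hBody : r.pos ∪ r.neg ≠ ∅) (w : ℝ) (hw : w ≠ 0) :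
    (∀ N : Program A, ∀ X : Set (Lit A),
        StableModel (({(w, r)} : Program A) ∪ N) X ↔ StableModel N X) ∧
    (∃ N : Program A, ∃ X : Set (Lit A),
        StableModel (({(w, r)} : Program A) ∪ N) X ∧
        WDeg (({(w, r)} : Program A) ∪ N) X ≠ WDeg N X) := by
  constructor
  · intro N X
    unfold StableModel
    constructor
    · rintro ⟨hc, hsat, hmin⟩
      refine ⟨hc, (key_equiv r hHead w N X X subset_rfl).mp hsat, fun Z hZ hZs => ?_⟩
      exact hmin Z hZ ((key_equiv r hHead w N X Z hZ.subset).mpr hZs)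
    · rintro ⟨hc, hsat, hmin⟩
      refine ⟨hc, (key_equiv r hHead w N X X subset_rfl).mpr hsat, fun Z hZ hZs => ?_⟩
      exact hmin Z hZ ((key_equiv r hHead w N X Z hZ.subset).mp hZs)
  · by_cases hpos : r.pos = ∅
    · -- then r.neg ≠ ∅; use a fact for some l ∈ r.neg
      have hneg : r.neg ≠ ∅ := by
        intro h; exact hBody (by rw [hpos, h, Set.union_empty])
      obtain ⟨l, hl⟩ := Set.nonempty_iff_ne_empty.mpr hneg
      set f : Rule A := ⟨{l}, ∅, ∅⟩ with hf
      refine ⟨{(0, f)}, {l}, ⟨?_, ?_, ?_⟩, ?_⟩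
      · -- Consistent {l}
        rintro a ⟨h1, h2⟩
        simp only [Set.mem_singleton_iff] at h1 h2
        simpa using congrArg Prod.fst (h1.trans h2.symm)
      · -- satProg
        rintro r'' ⟨s, hs, hnegs, heq⟩
        rw [mem_unweight_reduct] at hs
        obtain ⟨⟨v, hv⟩, _⟩ := hs
        rcases Finset.mem_union.mp hv with hv | hv
        · exfalso
          have hsr : s = r := (Prod.mk.injEq _ _ _ _ ▸ (Finset.mem_singleton.mp hv)).2
          rw [hsr] at hnegs
          exact absurd hnegs (by
            intro h
            have : l ∈ r.neg ∩ {l} := ⟨hl, rfl⟩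
            rw [h] at this; exact this)
        · have hsf : s = f := (Prod.mk.injEq _ _ _ _ ▸ (Finset.mem_singleton.mp hv)).2
          rw [hsf] at heq
          intro _
          rw [heq]
          exact ⟨l, rfl, rfl⟩
      · -- minimality
        intro Z hZ hZs
        have hfact : satRule {l} f := by
          intro _; exact ⟨l, rfl, rfl⟩
        have hmem : f ∈ unweight (reduct (({(w, r)} : Program A) ∪ {(0, f)}) {l}) := by
          rw [mem_unweight_reduct]
          exact ⟨⟨0, Finset.mem_union_right _ (Finset.mem_singleton_self _)⟩, hfact⟩
        have hgl : (⟨f.head, f.pos, ∅⟩ : Rule A) ∈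
            glReduct (unweight (reduct (({(w, r)} : Program A) ∪ {(0, f)}) {l})) {l} :=
          ⟨f, hmem, by simp [hf], rfl⟩
        have := hZs _ hgl ⟨by simp [hf], by simp [hf]⟩
        obtain ⟨x, hx1, hx2⟩ := this
        simp only [hf, Set.mem_inter_iff, Set.mem_singleton_iff] at hx1
        rw [hx1] at hx2
        exact hZ.2 (Set.singleton_subset_iff.mpr hx2)
      · -- weights differ
        have hrsat : satRule {l} r := by
          rintro ⟨_, hn⟩
          exfalso
          have : l ∈ r.neg ∩ {l} := ⟨hl, rfl⟩
          rw [hn] at this; exact this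
        have hfsat : satRule {l} f := fun _ => ⟨l, rfl, rfl⟩
        have hne : (w, r) ≠ (0, f) := by
          intro h; exact hw (congrArg Prod.fst h)
        have h1 : reduct (({(w, r)} : Program A) ∪ {(0, f)}) {l} =
            ({(w, r)} : Program A) ∪ {(0, f)} := by
          apply Finset.filter_true_of_mem
          intro x hx
          rcases Finset.mem_union.mp hx with hx | hx <;>
            rw [Finset.mem_singleton.mp hx] <;> assumption
        have h2 : reduct ({(0, f)} : Program A) {l} = {(0, f)} := by
          apply Finset.filter_true_of_mem
          intro x hx
          rw [Finset.mem_singleton.mp hx]; exact hfsat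
        unfold WDeg
        rw [h1, h2]
        rw [Finset.sum_union (Finset.disjoint_singleton.mpr hne), Finset.sum_singleton, Finset.sum_singleton]
        simp only [add_zero]
        intro h
        exact hw (by simpa using Real.exp_injective h)
    · -- r.pos ≠ ∅ : use N = ∅, X = ∅
      refine ⟨∅, ∅, ⟨?_, ?_, ?_⟩, ?_⟩
      · rintro a ⟨h1, _⟩; exact h1
      · rintro r'' ⟨s, hs, hnegs, heq⟩
        intro ⟨hp, _⟩
        rw [mem_unweight_reduct] at hs
        obtain ⟨⟨v, hv⟩, _⟩ := hs
        rw [Finset.union_empty] at hv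
        have hsr : s = r := (Prod.mk.injEq _ _ _ _ ▸ (Finset.mem_singleton.mp hv)).2
        rw [heq, hsr] at hp
        exact absurd (Set.subset_empty_iff.mp hp) hpos
      · intro Z hZ
        exact absurd hZ (by simp [Set.ssubset_def])
      · have hrsat : satRule ∅ r := by
          rintro ⟨hp, _⟩
          exact absurd (Set.subset_empty_iff.mp hp) hpos
        have h1 : reduct (({(w, r)} : Program A) ∪ ∅) ∅ = {(w, r)} := by
          rw [Finset.union_empty]
          apply Finset.filter_true_of_mem
          intro x hx
          rw [Finset.mem_singleton.mp hx]; exact hrsat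
        have h2 : reduct (∅ : Program A) ∅ = ∅ := rfl
        unfold WDeg
        rw [h1, h2, Finset.sum_singleton, Finset.sum_empty]
        intro h
        exact hw (by simpa using Real.exp_injective h)
end
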